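/- Let A be a unital Banach algebra and X a unit-linked Banach A-bimodule. Let p < 1 and θ ≥ 0. Suppose f : A → X satisfies f(0) = 0 and g : A → X satisfies g(0) = g(1) = 0, such that ‖f(a + λb + c²) − f(a) − λf(b) − c·f(c) − g(c)·c‖ ≤ θ‖f(c)‖ and ‖g(λab + λc) − λa·g(b) − λ·g(a)·b − λg(c)‖ ≤ θ(‖a‖^p + ‖b‖^p + ‖c‖^p) for all a, b, c ∈ A and all λ ∈ ℂ with |λ| = 1. Then the limit δ(c) := lim_{n→∞} 2^{−n} g(2^n c) exists for every c ∈ A, and f(c²) = c·f(c) + δ(c)·c for all c ∈ A. -/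

import Mathlib

/-! Putting `b = 1` in the second inequality gives `‖g(2c) - 2g(c)‖ ≤ 2θ‖c‖^p + θ‖1‖^p`, so for
`p < 1` the consecutive terms of `2⁻ⁿ g(2ⁿ c)` differ by a summable amount (Hyers' direct method).
Putting `c = 0` in the first inequality makes `f` additive; putting `a = b = 0` and replacing `c`
by `2ⁿ c`, then dividing by `4ⁿ`, bounds `f(c²) - c f(c) - 2⁻ⁿ g(2ⁿ c) c` by `θ‖f c‖ / 2ⁿ`. -/

open Filter Topology MulOpposite

set_option linter.unusedSectionVars false
set_option linter.unusedVariables false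

section

variable {A X : Type*}
  [NormedRing A] [NormedAlgebra ℂ A] [CompleteSpace A]
  [NormedAddCommGroup X] [NormedSpace ℂ X] [CompleteSpace X]
  [Module A X] [Module Aᵐᵒᵖ X]
  [IsBoundedSMul A X] [IsBoundedSMul Aᵐᵒᵖ X]
  [SMulCommClass A Aᵐᵒᵖ X]
  [IsScalarTower ℂ A X] [IsScalarTower ℂ Aᵐᵒᵖ X]

/-- A Jordan derivation from `A` into the bimodule `X`: a `ℂ`-linear map `δ` with
`δ(a²) = a·δ(a) + δ(a)·a`. -/
def IsJordanDeriv (δ : A → X) : Prop :=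
  (∀ x y : A, δ (x + y) = δ x + δ y) ∧ (∀ (μ : ℂ) (x : A), δ (μ • x) = μ • δ x) ∧
    ∀ a : A, δ (a ^ 2) = a • δ a + op a • δ a

/-- A generalized Jordan derivation: a `ℂ`-linear map `d` such that there is a Jordan
derivation `δ` with `d(a²) = a·d(a) + δ(a)·a`. -/
def IsGenJordanDeriv (d : A → X) : Prop :=
  (∀ x y : A, d (x + y) = d x + d y) ∧ (∀ (μ : ℂ) (x : A), d (μ • x) = μ • d x) ∧
    ∃ δ : A → X, IsJordanDeriv δ ∧ ∀ a : A, d (a ^ 2) = a • d a + op a • δ a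

theorem cauchySeq_two_pow_inv_smul_comp_two_pow_smul {𝕜 E F : Type*} [RCLike 𝕜]
    [NormedAddCommGroup E] [NormedSpace 𝕜 E] [NormedAddCommGroup F] [NormedSpace 𝕜 F]
    {h : E → F} {α β p : ℝ} (hp : p < 1)
    (hh : ∀ x, ‖h ((2 : 𝕜) • x) - (2 : 𝕜) • h x‖ ≤ α * ‖x‖ ^ p + β) (x : E) :
    CauchySeq fun n : ℕ => ((2 : 𝕜) ^ n)⁻¹ • h ((2 : 𝕜) ^ n • x) := by
  have h2p : (2 : ℝ) ^ (p - 1) < 1 := Real.rpow_lt_one_of_one_lt_of_neg one_lt_two (by linarith)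
  refine cauchySeq_of_dist_le_of_summable
    (fun n => α * ‖x‖ ^ p / 2 * (2 ^ (p - 1)) ^ n + β / 2 * (1 / 2) ^ n) (fun n => ?_)
    (((summable_geometric_of_lt_one (by positivity) h2p).mul_left _).add
      ((summable_geometric_of_lt_one (by norm_num) (by norm_num)).mul_left _))
  set y := (2 : 𝕜) ^ n • x
  have hdiff : ((2 : 𝕜) ^ n)⁻¹ • h y - ((2 : 𝕜) ^ (n + 1))⁻¹ • h ((2 : 𝕜) ^ (n + 1) • x) =
      -((2 : 𝕜) ^ (n + 1))⁻¹ • (h ((2 : 𝕜) • y) - (2 : 𝕜) • h y) := by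
    rw [pow_succ', mul_smul]
    module
  have hy : ‖y‖ ^ p = ((2 : ℝ) ^ p) ^ n * ‖x‖ ^ p := by
    rw [norm_smul, norm_pow, RCLike.norm_ofNat,
      Real.mul_rpow (by positivity) (norm_nonneg x), ← Real.rpow_natCast, ← Real.rpow_natCast,
      ← Real.rpow_mul zero_le_two, ← Real.rpow_mul zero_le_two, mul_comm p]
  have hscale : (2 : ℝ) ^ (p - 1) = (2 : ℝ) ^ p / 2 := by
    rw [Real.rpow_sub zero_lt_two, Real.rpow_one]
  rw [dist_eq_norm, hdiff, norm_smul, norm_neg, norm_inv, norm_pow, RCLike.norm_ofNat]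
  calc ((2 : ℝ) ^ (n + 1))⁻¹ * ‖h ((2 : 𝕜) • y) - (2 : 𝕜) • h y‖
      ≤ ((2 : ℝ) ^ (n + 1))⁻¹ * (α * ‖y‖ ^ p + β) := by gcongr; exact hh y
    _ = _ := by rw [hy, hscale, div_pow, one_div_pow]; field_simp; ring

theorem norm_sq_sub_sub_two_pow_le {f g : A → X} {θ : ℝ} (hf : ∀ a b, f (a + b) = f a + f b)
    (hfg : ∀ c : A, ‖f (c ^ 2) - c • f c - op c • g c‖ ≤ θ * ‖f c‖) (c : A) (n : ℕ) :
    ‖f (c ^ 2) - c • f c - op c • (((2 : ℂ) ^ n)⁻¹ • g ((2 : ℂ) ^ n • c))‖ ≤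
      θ * ‖f c‖ / 2 ^ n := by
  set μ : ℂ := (2 : ℂ) ^ n
  have hμ : μ ≠ 0 := pow_ne_zero n two_ne_zero
  have hμnorm : ‖μ‖ = 2 ^ n := by simp [μ]
  have hfμ (x : A) : f (μ • x) = μ • f x := by
    have hcast : μ = ((2 ^ n : ℕ) : ℂ) := by push_cast; rfl
    rw [hcast]
    exact map_natCast_smul (AddMonoidHom.mk' f hf) ℂ ℂ (2 ^ n) x
  have hscaled : f ((μ • c) ^ 2) - (μ • c) • f (μ • c) - op (μ • c) • g (μ • c) =
      (μ * μ) • (f (c ^ 2) - c • f c - op c • (μ⁻¹ • g (μ • c))) := by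
    rw [smul_pow, sq μ, mul_smul, hfμ, hfμ, hfμ, op_smul, smul_assoc, smul_assoc, smul_comm c μ,
      smul_comm (op c) μ⁻¹]
    generalize c • f c = u
    generalize op c • g (μ • c) = v
    match_scalars <;> field_simp
  have hbound := hfg (μ • c)
  rw [hscaled, norm_smul, norm_mul, hμnorm, hfμ, norm_smul, hμnorm] at hbound
  rw [le_div_iff₀ (by positivity)]
  nlinarith [pow_pos (two_pos : (0 : ℝ) < 2) n]

theorem sq_eq_smul_add_op_smul_of_tendsto {f g : A → X} {θ : ℝ} {d : X} {c : A}
    (hf : ∀ a b, f (a + b) = f a + f b)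
    (hfg : ∀ c : A, ‖f (c ^ 2) - c • f c - op c • g c‖ ≤ θ * ‖f c‖)
    (hd : Tendsto (fun n : ℕ => ((2 : ℂ) ^ n)⁻¹ • g ((2 : ℂ) ^ n • c)) atTop (𝓝 d)) :
    f (c ^ 2) = c • f c + op c • d := by
  have hlim : Tendsto (fun n : ℕ => θ * ‖f c‖ / 2 ^ n) atTop (𝓝 0) := by
    simpa [div_eq_mul_inv] using
      (tendsto_pow_atTop_nhds_zero_of_lt_one (r := (2 : ℝ)⁻¹) (by norm_num) (by norm_num)).const_mul
        (θ * ‖f c‖)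
  have hle := le_of_tendsto_of_tendsto' ((tendsto_const_nhds.sub (hd.const_smul (op c))).norm)
    hlim (norm_sq_sub_sub_two_pow_le hf hfg c)
  rwa [norm_le_zero_iff, sub_eq_zero, sub_eq_iff_eq_add'] at hle

theorem stmt_general (f g : A → X) (θ p : ℝ) (hp : p < 1)
    (hf0 : f 0 = 0) (hg0 : g 0 = 0) (hg1 : g 1 = 0)
    (h1 : ∀ (a b c : A) (μ : ℂ), ‖μ‖ = 1 →
      ‖f (a + μ • b + c ^ 2) - f a - μ • f b - c • f c - op c • g c‖ ≤ θ * ‖f c‖)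
    (h2 : ∀ (a b c : A) (μ : ℂ), ‖μ‖ = 1 →
      ‖g (μ • (a * b) + μ • c) - μ • a • g b - μ • op b • g a - μ • g c‖ ≤
        θ * (‖a‖ ^ p + ‖b‖ ^ p + ‖c‖ ^ p)) :
    ∃ δ : A → X, (∀ c : A, Tendsto (fun n : ℕ => ((2 : ℂ) ^ n)⁻¹ • g ((2 : ℂ) ^ n • c)) atTop (𝓝 (δ c))) ∧
      ∀ c : A, f (c ^ 2) = c • f c + op c • δ c := by
  have hf_add (a b : A) : f (a + b) = f a + f b := by
    simpa [hf0, hg0, sub_sub, sub_eq_zero] using h1 a b 0 1 norm_one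
  have hfg (c : A) : ‖f (c ^ 2) - c • f c - op c • g c‖ ≤ θ * ‖f c‖ := by
    simpa [hf0] using h1 0 0 c 1 norm_one
  have hg_two (c : A) :
      ‖g ((2 : ℂ) • c) - (2 : ℂ) • g c‖ ≤ 2 * θ * ‖c‖ ^ p + θ * ‖(1 : A)‖ ^ p := by
    have hc := h2 c 1 c 1 norm_one
    simp only [one_smul, mul_one, hg1, smul_zero, op_one, sub_zero, sub_sub] at hc
    rw [two_smul, two_smul]
    linarith
  choose δ hδ using fun c =>
    cauchySeq_tendsto_of_complete (cauchySeq_two_pow_inv_smul_comp_two_pow_smul hp hg_two c)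
  exact ⟨δ, hδ, fun c => sq_eq_smul_add_op_smul_of_tendsto hf_add hfg (hδ c)⟩

theorem stmt (f g : A → X) (θ p : ℝ) (hθ : 0 ≤ θ) (hp : p < 1)
    (hf0 : f 0 = 0) (hg0 : g 0 = 0) (hg1 : g 1 = 0)
    (h1 : ∀ (a b c : A) (μ : ℂ), ‖μ‖ = 1 →
      ‖f (a + μ • b + c ^ 2) - f a - μ • f b - c • f c - op c • g c‖ ≤ θ * ‖f c‖)
    (h2 : ∀ (a b c : A) (μ : ℂ), ‖μ‖ = 1 →
      ‖g (μ • (a * b) + μ • c) - μ • a • g b - μ • op b • g a - μ • g c‖ ≤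
        θ * (‖a‖ ^ p + ‖b‖ ^ p + ‖c‖ ^ p)) :
    ∃ δ : A → X, (∀ c : A, Tendsto (fun n : ℕ => ((2 : ℂ) ^ n)⁻¹ • g ((2 : ℂ) ^ n • c)) atTop (𝓝 (δ c))) ∧
      ∀ c : A, f (c ^ 2) = c • f c + op c • δ c :=
  stmt_general f g θ p hp hf0 hg0 hg1 h1 h2
end
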